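/- Every connected α-critical graph that is not isomorphic to K₁ or K₂ and has maximum degree at most 2 is an odd cycle. -/

import Mathlib

open SimpleGraph

variable {V : Type*}

/-- The maximum size of an independent (stable) set of a simple graph. -/
noncomputable def alpha (G : SimpleGraph V) : ℕ :=
  sSup {n | ∃ s : Finset V, (∀ x ∈ s, ∀ y ∈ s, ¬ G.Adj x y) ∧ s.card = n}

/-- A graph is α-critical if deleting any edge increases α. -/
def AlphaCritical (G : SimpleGraph V) : Prop :=
  ∀ x y : V, G.Adj x y → alpha G < alpha (G.deleteEdges {s(x, y)})

/-- `G` contains a totally odd K₄-subdivision: four distinct branch vertices joined by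
six internally disjoint paths of odd length. -/
def HasTOK4 (G : SimpleGraph V) : Prop :=
  ∃ b : Fin 4 → V, Function.Injective b ∧
  ∃ P : ∀ i j : Fin 4, G.Walk (b i) (b j),
    (∀ i j, i ≠ j → (P i j).IsPath) ∧
    (∀ i j, i ≠ j → Odd (P i j).length) ∧
    (∀ i j k l : Fin 4, i ≠ j → k ≠ l → s(i, j) ≠ s(k, l) →
      ∀ v : V, v ∈ (P i j).support → v ∈ (P k l).support →
        (v = b i ∨ v = b j) ∧ (v = b k ∨ v = b l))

/-- `G` is (isomorphic to) a totally odd K₄-subdivision: it has one that uses all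
vertices and all edges of `G`. -/
def IsTOK4 (G : SimpleGraph V) : Prop :=
  ∃ b : Fin 4 → V, Function.Injective b ∧
  ∃ P : ∀ i j : Fin 4, G.Walk (b i) (b j),
    (∀ i j, i ≠ j → (P i j).IsPath) ∧
    (∀ i j, i ≠ j → Odd (P i j).length) ∧
    (∀ i j k l : Fin 4, i ≠ j → k ≠ l → s(i, j) ≠ s(k, l) →
      ∀ v : V, v ∈ (P i j).support → v ∈ (P k l).support →
        (v = b i ∨ v = b j) ∧ (v = b k ∨ v = b l)) ∧
    (∀ v : V, ∃ i j, i ≠ j ∧ v ∈ (P i j).support) ∧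
    (∀ e ∈ G.edgeSet, ∃ i j, i ≠ j ∧ e ∈ (P i j).edges)

/-- `G` is an odd cycle: a cycle of odd length passing through all vertices
and using all edges of `G`. -/
def IsOddCycle (G : SimpleGraph V) : Prop :=
  ∃ (v : V) (w : G.Walk v v), w.IsCycle ∧ Odd w.length ∧
    (∀ u : V, u ∈ w.support) ∧ (∀ e ∈ G.edgeSet, e ∈ w.edges)

/-- `G` is isomorphic to the complete graph on one vertex. -/
def IsK1 (G : SimpleGraph V) : Prop := Nonempty (G ≃g (⊤ : SimpleGraph (Fin 1)))

/-- `G` is isomorphic to the complete graph on two vertices. -/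
def IsK2 (G : SimpleGraph V) : Prop := Nonempty (G ≃g (⊤ : SimpleGraph (Fin 2)))

/-!
α-criticality rules out pendant vertices: if `v` hangs at `u` and `uw` is another edge, an
independent set of `G - uw` larger than `α(G)` contains `u` and `w`, and exchanging `u` for `v`
gives an independent set of `G` of the same size. So, unless `G` is `K₂`, every vertex has degree
exactly two, and the connected graph `G` is one spanning cycle. Were its length even, deleting an
edge would leave a spanning path, whose independent sets use at most half of the vertices, while
every second vertex of the cycle already forms an independent set of that size in `G`.
-/

open Finset

namespace SimpleGraph

variable {G : SimpleGraph V}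

theorem Reachable.mem_of_forall_adj_mem {s : Set V} (hs : ∀ x y, G.Adj x y → x ∈ s → y ∈ s)
    {x y : V} (h : G.Reachable x y) (hx : x ∈ s) : y ∈ s := by
  obtain ⟨p⟩ := h
  induction p with
  | nil => exact hx
  | cons h _ ih => exact ih (hs _ _ h hx)

theorem nonempty_iso_top_of_forall_adj [Fintype V] (h : ∀ x y, x ≠ y → G.Adj x y) :
    Nonempty (G ≃g (⊤ : SimpleGraph (Fin (Fintype.card V)))) := by
  obtain rfl : G = ⊤ := by ext x y; exact ⟨G.ne_of_adj, h x y⟩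
  exact ⟨Iso.completeGraph (Fintype.equivFin V)⟩

theorem IsIndepSet.card_le_of_forall_mem_support {S : Finset V} (hS : G.IsIndepSet S)
    {u v : V} (p : G.Walk u v) (hsub : ∀ x ∈ S, x ∈ p.support) : #S ≤ (p.length + 2) / 2 := by
  choose! idx hidx using fun x hx ↦ Walk.mem_support_iff_exists_getVert.1 (hsub x hx)
  -- Distinct vertices of `S` at positions with the same half would be consecutive on `p`.
  calc #S ≤ #(range ((p.length + 2) / 2)) := by
        refine card_le_card_of_injOn (fun x ↦ idx x / 2) (fun x hx ↦ ?_) fun x hx y hy hxy ↦ ?_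
        · have := (hidx x hx).2
          simp only [coe_range, Set.mem_Iio]
          omega
        · by_contra hne
          obtain ⟨hx', hxl⟩ := hidx x hx
          obtain ⟨hy', hyl⟩ := hidx y hy
          have hidx_ne : idx x ≠ idx y := fun h ↦ hne (by rw [← hx', ← hy', h])
          simp only at hxy
          rcases (by omega : idx x + 1 = idx y ∨ idx y + 1 = idx x) with h | h
          · have hadj := p.adj_getVert_succ (i := idx x) (by omega)
            rw [h, hx', hy'] at hadj
            exact hS hx hy hne hadj
          · have hadj := p.adj_getVert_succ (i := idx y) (by omega)
            rw [h, hx', hy'] at hadj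
            exact hS hy hx (Ne.symm hne) hadj
    _ = (p.length + 2) / 2 := card_range _

namespace Walk

def evenVerts [DecidableEq V] {u v : V} (p : G.Walk u v) : Finset V :=
  (range ((p.length + 2) / 2)).image fun i ↦ p.getVert (2 * i)

variable [DecidableEq V] {u v : V} {p : G.Walk u v}

theorem IsPath.card_evenVerts (hp : p.IsPath) : #p.evenVerts = (p.length + 2) / 2 := by
  rw [evenVerts, card_image_of_injOn, card_range]
  intro i hi j hj hij
  simp only [coe_range, Set.mem_Iio] at hi hj
  have := hp.getVert_injOn (by simp only [Set.mem_ofPred_eq]; omega)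
    (by simp only [Set.mem_ofPred_eq]; omega) hij
  omega

/-- For `p` of odd length, `hE` makes the parity of the position on `p` a proper 2-colouring. -/
theorem IsPath.isIndepSet_evenVerts (hp : p.IsPath) (hodd : Odd p.length)
    (hE : ∀ x y, G.Adj x y → s(x, y) ∈ p.edges ∨ s(x, y) = s(u, v)) :
    G.IsIndepSet p.evenVerts := by
  rintro _ hx _ hy - hadj
  simp only [evenVerts, coe_image, coe_range, Set.mem_image, Set.mem_Iio] at hx hy
  obtain ⟨i, hi, rfl⟩ := hx
  obtain ⟨j, hj, rfl⟩ := hy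
  obtain ⟨m, n, hm, hn, hmn, heq⟩ : ∃ m n, m ≤ p.length ∧ n ≤ p.length ∧ Odd (m + n) ∧
      s(p.getVert m, p.getVert n) = s(p.getVert (2 * i), p.getVert (2 * j)) := by
    rcases hE _ _ hadj with h | h
    · obtain ⟨m, hm, heq⟩ := (mk_mem_edges_iff_exists p).1 h
      exact ⟨m, m + 1, hm.le, hm, by grind, heq⟩
    · exact ⟨0, p.length, p.length.zero_le, le_rfl, by simpa using hodd,
        by rw [getVert_zero, getVert_length, h]⟩
  have hinj {a b : ℕ} (ha : a ≤ p.length) (hb : b ≤ p.length) (h : p.getVert a = p.getVert b) :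
      a = b := hp.getVert_injOn ha hb h
  rcases Sym2.eq_iff.1 heq with ⟨h, h'⟩ | ⟨h, h'⟩
  all_goals
    have := hinj hm (by omega) h
    have := hinj hn (by omega) h'
    grind

end Walk

section DeleteEdge

variable [Finite V] {x y : V}

theorem IsIndepSet.mem_of_indepNum_lt {S : Finset V}
    (hS : (G.deleteEdges {s(x, y)}).IsIndepSet S) (hlt : G.indepNum < #S) : x ∈ S ∧ y ∈ S := by
  by_contra hxy
  refine hlt.not_ge (IsIndepSet.card_le_indepNum fun a ha b hb hab hadj ↦ hS ha hb hab ?_)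
  refine (deleteEdges_adj ..).2 ⟨hadj, fun he ↦ hxy ?_⟩
  rcases Sym2.eq_iff.1 (Set.mem_singleton_iff.1 he) with ⟨rfl, rfl⟩ | ⟨rfl, rfl⟩
  exacts [⟨ha, hb⟩, ⟨hb, ha⟩]

theorem exists_isIndepSet_deleteEdges (h : G.indepNum < (G.deleteEdges {s(x, y)}).indepNum) :
    ∃ S : Finset V, (G.deleteEdges {s(x, y)}).IsIndepSet S ∧ G.indepNum < #S ∧ x ∈ S ∧ y ∈ S := by
  obtain ⟨S, hS, hcard⟩ := (G.deleteEdges {s(x, y)}).exists_isNIndepSet_indepNum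
  exact ⟨S, hS, hcard ▸ h, hS.mem_of_indepNum_lt (hcard ▸ h)⟩

end DeleteEdge

theorem Connected.exists_isCycle_of_isCycles [Finite V] (hconn : G.Connected)
    (hcyc : G.IsCycles) {v w : V} (hadj : G.Adj v w) :
    ∃ c : G.Walk v v, c.IsCycle ∧ (∀ u, u ∈ c.support) ∧ ∀ e ∈ G.edgeSet, e ∈ c.edges := by
  classical
  have := Fintype.ofFinite V
  obtain ⟨c, hc, hverts⟩ := hcyc.exists_cycle_toSubgraph_verts_eq_connectedComponentSupp
    (c := G.connectedComponentMk v) rfl ⟨w, hadj⟩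
  have hsupp : ∀ u, u ∈ c.support := fun u ↦ by
    rw [← Walk.mem_verts_toSubgraph, hverts, ConnectedComponent.mem_supp_iff,
      ConnectedComponent.eq]
    exact hconn.preconnected u v
  refine ⟨c, hc, hsupp, fun e he ↦ ?_⟩
  induction e using Sym2.ind with
  | _ x y =>
    rw [← Walk.adj_toSubgraph_iff_mem_edges,
      hc.adj_toSubgraph_iff_of_isCycles hcyc (c.mem_verts_toSubgraph.2 (hsupp x))]
    exact he

end SimpleGraph

theorem alpha_eq_indepNum (G : SimpleGraph V) : alpha G = G.indepNum := by
  unfold alpha indepNum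
  congr 1
  ext n
  simp only [Set.mem_ofPred_eq, isNIndepSet_iff, isIndepSet_iff, Set.Pairwise, mem_coe]
  exact exists_congr fun s ↦ and_congr_left fun _ ↦
    ⟨fun h x hx y hy _ ↦ h x hx y hy, fun h x hx y hy hxy ↦ h hx hy (G.ne_of_adj hxy) hxy⟩

section AlphaCritical

variable {G : SimpleGraph V}

theorem AlphaCritical.indepNum_lt (hG : AlphaCritical G) {x y : V}
    (h : G.Adj x y) : G.indepNum < (G.deleteEdges {s(x, y)}).indepNum := by
  simpa only [alpha_eq_indepNum] using hG x y h

theorem nontrivial_of_not_isK1 [Fintype V] [Nonempty V] (h1 : ¬ IsK1 G) : Nontrivial V := by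
  by_contra hV
  have hsub := not_nontrivial_iff_subsingleton.1 hV
  have hcard : Fintype.card V = 1 :=
    le_antisymm (Fintype.card_le_one_iff_subsingleton.2 hsub) Fintype.card_pos
  have hiso := nonempty_iso_top_of_forall_adj (G := G) fun x y hxy ↦
    (hxy (Subsingleton.elim x y)).elim
  rw [hcard] at hiso
  exact h1 hiso

theorem AlphaCritical.eq_of_neighborSet_eq_singleton [Finite V] (hG : AlphaCritical G) {u v w : V}
    (hv : G.neighborSet v = {u}) (huw : G.Adj u w) : w = v := by
  classical
  by_contra hwv
  obtain ⟨S, hS, hlt, huS, -⟩ := exists_isIndepSet_deleteEdges (hG.indepNum_lt huw)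
  have hnbr : ∀ {z}, G.Adj v z → z = u := fun {z} h ↦ by
    rw [← mem_neighborSet, hv] at h
    exact h
  have hvu : G.Adj v u := by rw [← mem_neighborSet, hv]; rfl
  have hvS : v ∉ S := fun hvS ↦ hS hvS huS hvu.ne <| (deleteEdges_adj ..).2
    ⟨hvu, by grind [Sym2.eq_iff, G.ne_of_adj hvu]⟩
  have hT : G.IsIndepSet (insert v (S.erase u) : Finset V) := by
    rw [coe_insert, isIndepSet_iff, Set.pairwise_insert]
    refine ⟨fun a ha b hb hab hadj ↦ ?_, fun b hb _ ↦ ⟨fun hadj ↦ (mem_erase.1 hb).1 (hnbr hadj),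
      fun hadj ↦ (mem_erase.1 hb).1 (hnbr hadj.symm)⟩⟩
    rw [mem_coe, mem_erase] at ha hb
    exact hS ha.2 hb.2 hab <| (deleteEdges_adj ..).2
      ⟨hadj, by grind [Sym2.eq_iff]⟩
  have hcard := hT.card_le_indepNum
  rw [card_insert_of_notMem fun h ↦ hvS (mem_of_mem_erase h), card_erase_of_mem huS] at hcard
  have := card_pos.2 ⟨u, huS⟩
  omega

theorem AlphaCritical.isK2_of_neighborSet_eq_singleton [Fintype V] (hG : AlphaCritical G)
    (hconn : G.Connected) {u v : V} (hv : G.neighborSet v = {u}) : IsK2 G := by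
  have hvu : G.Adj v u := by rw [← mem_neighborSet, hv]; rfl
  have hall : ∀ z, z = u ∨ z = v := fun z ↦ (hconn v z).mem_of_forall_adj_mem (s := {u, v})
    (by
      rintro x y hxy (rfl | rfl)
      · exact Or.inr (hG.eq_of_neighborSet_eq_singleton hv hxy)
      · rw [← mem_neighborSet, hv] at hxy
        exact Or.inl hxy)
    (Or.inr rfl)
  have hcard : Fintype.card V = 2 := by
    rw [← Nat.card_eq_fintype_card, Nat.card_eq_two_iff]
    exact ⟨u, v, hvu.ne.symm, Set.eq_univ_of_forall hall⟩
  have hiso := nonempty_iso_top_of_forall_adj (G := G) fun x y hxy ↦ by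
    rcases hall x with rfl | rfl <;> rcases hall y with rfl | rfl
    exacts [(hxy rfl).elim, hvu.symm, hvu, (hxy rfl).elim]
  rw [hcard] at hiso
  exact hiso

theorem AlphaCritical.isCycles [Fintype V] (hG : AlphaCritical G) (hconn : G.Connected)
    (h2 : ¬ IsK2 G) (hdeg : ∀ v, (G.neighborSet v).ncard ≤ 2) : G.IsCycles := by
  intro v hv
  have hpos := (Set.ncard_pos (Set.toFinite _)).2 hv
  have hne_one : (G.neighborSet v).ncard ≠ 1 := fun h ↦ by
    obtain ⟨u, hu⟩ := Set.ncard_eq_one.1 h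
    exact h2 (hG.isK2_of_neighborSet_eq_singleton hconn hu)
  have := hdeg v
  omega

theorem AlphaCritical.odd_length_of_isCycle [Finite V] (hG : AlphaCritical G) {v : V}
    {c : G.Walk v v} (hc : c.IsCycle) (hsupp : ∀ u, u ∈ c.support)
    (hedges : ∀ e ∈ G.edgeSet, e ∈ c.edges) : Odd c.length := by
  classical
  cases c with
  | nil => exact absurd hc Walk.not_isCycle_nil
  | cons hvw p =>
    obtain ⟨hp, hvw_notMem⟩ := (Walk.cons_isCycle_iff p hvw).1 hc
    obtain ⟨S, hS, hlt, -⟩ := exists_isIndepSet_deleteEdges (hG.indepNum_lt hvw)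
    have hupper : #S ≤ (p.length + 2) / 2 := by
      have hpS : ∀ x ∈ S, x ∈ p.support := fun x _ ↦ by
        rcases List.mem_cons.1 ((Walk.support_cons ..) ▸ hsupp x) with rfl | h
        exacts [p.end_mem_support, h]
      simpa using
        hS.card_le_of_forall_mem_support (p.toDeleteEdge _ hvw_notMem) (by simpa using hpS)
    rw [Walk.length_cons, Nat.odd_add_one]
    intro hodd
    have hE : ∀ x y, G.Adj x y → s(x, y) ∈ p.edges ∨ s(x, y) = s(_, v) := fun x y hxy ↦ by
      have := hedges _ (G.mem_edgeSet.2 hxy)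
      rw [Walk.edges_cons, List.mem_cons, Sym2.eq_swap (a := v)] at this
      exact this.symm
    have hlower := (hp.isIndepSet_evenVerts hodd hE).card_le_indepNum
    rw [hp.card_evenVerts] at hlower
    omega

end AlphaCritical

theorem stmt_15 {V : Type*} [Fintype V] (G : SimpleGraph V) (hconn : G.Connected)
    (hG : AlphaCritical G) (h1 : ¬ IsK1 G) (h2 : ¬ IsK2 G)
    (hdeg : ∀ v : V, (G.neighborSet v).ncard ≤ 2) :
    IsOddCycle G := by
  have := hconn.nonempty
  have := nontrivial_of_not_isK1 h1
  obtain ⟨w, hvw⟩ := hconn.preconnected.exists_adj_of_nontrivial (Classical.arbitrary V)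
  obtain ⟨c, hc, hsupp, hedges⟩ :=
    hconn.exists_isCycle_of_isCycles (hG.isCycles hconn h2 hdeg) hvw
  exact ⟨_, c, hc, hG.odd_length_of_isCycle hc hsupp hedges, hsupp, hedges⟩
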